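/- arXiv:2111.12151 — 3 statements merged into one kernel-verified Lean document; each statement's English description precedes it below -/
import Mathlib

section
/- Fix γ > 0, μ > 0, a₀ > 0 and ℓ ∈ ℕ with ℓ ≥ 1. Define A(ℓ) := γ^ℓ · 2^{ℓ(ℓ+1)/2} / ( μ · Σ_{k=1}^{ℓ} 2^{ℓ−k} γ^{k−1} 2^{k(k+1)/2} + 2^ℓ/a₀ ). Then A satisfies the recursive inequality: γ / ( μ + 2·2^{−(ℓ+1)} / A(ℓ) ) ≥ A(ℓ+1). -/
noncomputable def Aval (γ μ a₀ : ℝ) (ℓ : ℕ) : ℝ :=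
  γ ^ ℓ * 2 ^ (ℓ * (ℓ + 1) / 2) /
    (μ * (∑ k ∈ Finset.Icc 1 ℓ, 2 ^ (ℓ - k) * γ ^ (k - 1) * 2 ^ (k * (k + 1) / 2))
      + 2 ^ ℓ / a₀)

lemma Ssucc (γ : ℝ) (ℓ : ℕ) :
    (∑ k ∈ Finset.Icc 1 (ℓ + 1), (2:ℝ) ^ (ℓ + 1 - k) * γ ^ (k - 1) * 2 ^ (k * (k + 1) / 2))
    = 2 * (∑ k ∈ Finset.Icc 1 ℓ, (2:ℝ) ^ (ℓ - k) * γ ^ (k - 1) * 2 ^ (k * (k + 1) / 2))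
      + γ ^ ℓ * 2 ^ ((ℓ + 1) * (ℓ + 2) / 2) := by
  rw [Finset.sum_Icc_succ_top (by omega : 1 ≤ ℓ + 1), Finset.mul_sum]
  congr 1
  · refine Finset.sum_congr rfl fun k hk => ?_
    have hk' : k ≤ ℓ := (Finset.mem_Icc.mp hk).2
    have : ℓ + 1 - k = (ℓ - k) + 1 := by omega
    rw [this, pow_succ]
    ring
  · simp

theorem stmt_6 (γ μ a₀ : ℝ) (hγ : 0 < γ) (hμ : 0 < μ) (ha : 0 < a₀)
    (ℓ : ℕ) (hℓ : 1 ≤ ℓ) :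
    Aval γ μ a₀ (ℓ + 1) ≤ γ / (μ + 2 * ((2 : ℝ) ^ (ℓ + 1))⁻¹ / Aval γ μ a₀ ℓ) := by
  set S := ∑ k ∈ Finset.Icc 1 ℓ, (2:ℝ) ^ (ℓ - k) * γ ^ (k - 1) * 2 ^ (k * (k + 1) / 2) with hS
  have hSpos : 0 < S := by
    apply Finset.sum_pos
    · intro k hk
      positivity
    · exact ⟨1, Finset.mem_Icc.mpr ⟨le_refl 1, hℓ⟩⟩
  have hD : 0 < μ * S + (2:ℝ) ^ ℓ / a₀ := by positivity
  have hN : 0 < γ ^ ℓ * (2:ℝ) ^ (ℓ * (ℓ + 1) / 2) := by positivity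
  have hA : Aval γ μ a₀ ℓ = γ ^ ℓ * 2 ^ (ℓ * (ℓ + 1) / 2) / (μ * S + 2 ^ ℓ / a₀) := rfl
  have hT : (ℓ + 1) * (ℓ + 1 + 1) / 2 = ℓ * (ℓ + 1) / 2 + (ℓ + 1) := by
    obtain ⟨c, hc⟩ := Nat.even_mul_succ_self ℓ
    have hm : (ℓ + 1) * (ℓ + 1 + 1) = ℓ * (ℓ + 1) + 2 * (ℓ + 1) := by ring
    omega
  have hA' : Aval γ μ a₀ (ℓ + 1) =
      γ ^ (ℓ + 1) * 2 ^ (ℓ * (ℓ + 1) / 2 + (ℓ + 1)) /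
        (μ * (2 * S + γ ^ ℓ * 2 ^ (ℓ * (ℓ + 1) / 2 + (ℓ + 1))) + 2 ^ (ℓ + 1) / a₀) := by
    rw [Aval, Ssucc, hT]
  apply le_of_eq
  rw [hA', hA]
  have h2 : (0:ℝ) < (2:ℝ) ^ (ℓ + 1) := by positivity
  have hden2 : 0 < μ * (2 * S + γ ^ ℓ * 2 ^ (ℓ * (ℓ + 1) / 2 + (ℓ + 1))) + 2 ^ (ℓ + 1) / a₀ := by
    positivity
  field_simp
  ring
end

section
/- Fix γ > 0, μ > 0, a₀ > 0 and 0 < α. If ℓ ≥ max{ 8, √(8 log₂(2γ/α)), √(4 log₂(2γ/(a₀ μ α))), 4 log₂(2^{1/2}/γ), log₂(4/(γα)) + 2 log₂(log₂(4/(γα))) }, then γ^ℓ 2^{ℓ(ℓ+1)/2} / ( μ Σ_{k=1}^{ℓ} 2^{ℓ−k} γ^{k−1} 2^{k(k+1)/2} + 2^ℓ/a₀ ) ≥ γ/((1+α) μ). -/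
open Real Finset

set_option maxHeartbeats 1000000 in
theorem stmt_8 (γ μ a₀ α : ℝ) (hγ : 0 < γ) (hμ : 0 < μ) (ha : 0 < a₀) (hα : 0 < α)
    (ℓ : ℕ)
    (hℓ : max (max (max (max (8 : ℝ)
        (Real.sqrt (8 * Real.logb 2 (2 * γ / α))))
        (Real.sqrt (4 * Real.logb 2 (2 * γ / (a₀ * μ * α)))))
        (4 * Real.logb 2 (2 ^ ((1 : ℝ)/2) / γ)))
        (Real.logb 2 (4 / (γ * α)) + 2 * Real.logb 2 (Real.logb 2 (4 / (γ * α))))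
      ≤ (ℓ : ℝ)) :
    γ / ((1 + α) * μ) ≤
      γ ^ ℓ * 2 ^ (ℓ * (ℓ + 1) / 2) /
        (μ * (∑ k ∈ Finset.Icc 1 ℓ, 2 ^ (ℓ - k) * γ ^ (k - 1) * 2 ^ (k * (k + 1) / 2))
          + 2 ^ ℓ / a₀) := by
  have h2 : (0:ℝ) < 2 := two_pos
  simp only [max_le_iff] at hℓ
  obtain ⟨⟨⟨⟨h8, _hB⟩, hC⟩, hD⟩, hE⟩ := hℓ
  have hℓ8 : 8 ≤ ℓ := by exact_mod_cast h8
  have hℓ1 : 1 ≤ ℓ := by omega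
  set g : ℝ := Real.logb 2 γ with hgdef
  have hγ2 : γ = (2:ℝ)^g := (Real.rpow_logb h2 (by norm_num) hγ).symm
  -- gamma lower bound from condition D
  have hgl : 1/2 - (ℓ:ℝ)/4 ≤ g := by
    have e : Real.logb 2 ((2:ℝ)^((1:ℝ)/2)/γ) = 1/2 - g := by
      rw [Real.logb_div (by positivity) (ne_of_gt hγ), Real.logb_rpow h2 (by norm_num)]
    rw [e] at hD; linarith
  -- triangular number cast
  have htri : ∀ k : ℕ, ((k*(k+1)/2 : ℕ):ℝ) = (k:ℝ)*((k:ℝ)+1)/2 := by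
    intro k
    rw [Nat.cast_div (Nat.even_mul_succ_self k).two_dvd (by norm_num)]
    push_cast; ring
  -- top term in exponential form
  have htℓe : γ^(ℓ-1) * (2:ℝ)^(ℓ*(ℓ+1)/2) =
      (2:ℝ)^(g*((ℓ:ℝ)-1) + (ℓ:ℝ)*((ℓ:ℝ)+1)/2) := by
    rw [hγ2, ← Real.rpow_natCast ((2:ℝ)^g) (ℓ-1), ← Real.rpow_mul h2.le,
      ← Real.rpow_natCast (2:ℝ) (ℓ*(ℓ+1)/2), ← Real.rpow_add h2,
      Nat.cast_sub hℓ1, htri ℓ]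
    norm_num
  have htℓpos : (0:ℝ) < γ^(ℓ-1) * (2:ℝ)^(ℓ*(ℓ+1)/2) := by positivity
  -- split off the top term of the sum
  have hsplit : (∑ k ∈ Finset.Icc 1 ℓ, (2:ℝ)^(ℓ-k) * γ^(k-1) * 2^(k*(k+1)/2))
      = (∑ k ∈ Finset.Icc 1 (ℓ-1), (2:ℝ)^(ℓ-k) * γ^(k-1) * 2^(k*(k+1)/2))
        + γ^(ℓ-1) * 2^(ℓ*(ℓ+1)/2) := by
    have h := Finset.sum_Icc_succ_top (a := 1) (b := ℓ-1)
      (f := fun k => (2:ℝ)^(ℓ-k) * γ^(k-1) * 2^(k*(k+1)/2)) (by omega)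
    rw [show ℓ-1+1 = ℓ from by omega] at h
    rw [h, Nat.sub_self, pow_zero, one_mul]
  -- per-term envelope bound
  have key : ∀ k ∈ Finset.Icc 1 (ℓ-1),
      (2:ℝ)^(ℓ-k) * γ^(k-1) * 2^(k*(k+1)/2)
        ≤ (2:ℝ)^((1:ℝ)-(ℓ:ℝ)-g) * (γ^(ℓ-1) * 2^(ℓ*(ℓ+1)/2)) * ((2:ℝ)^(-(1:ℝ)/2))^(ℓ-1-k) := by
    intro k hk
    rw [Finset.mem_Icc] at hk
    obtain ⟨hk1, hk2⟩ := hk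
    rw [hγ2]
    simp only [← Real.rpow_natCast, ← Real.rpow_mul h2.le, ← Real.rpow_add h2]
    apply Real.rpow_le_rpow_of_exponent_le (by norm_num)
    rw [Nat.cast_sub (show k ≤ ℓ-1 by omega), Nat.cast_sub (show k ≤ ℓ by omega),
      Nat.cast_sub hk1, Nat.cast_sub hℓ1, htri k, htri ℓ]
    push_cast
    have hk1' : (1:ℝ) ≤ (k:ℝ) := by exact_mod_cast hk1
    have hk2' : (k:ℝ) ≤ (ℓ:ℝ) - 1 := by
      have : (k:ℝ) ≤ ((ℓ-1:ℕ):ℝ) := by exact_mod_cast hk2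
      rwa [Nat.cast_sub hℓ1, Nat.cast_one] at this
    have hd : (0:ℝ) ≤ (ℓ:ℝ) - 1 - (k:ℝ) := by linarith
    have hgd : (0:ℝ) ≤ g + (ℓ:ℝ) - 2 - ((ℓ:ℝ)-1-(k:ℝ))/2 := by linarith
    nlinarith [mul_nonneg hd hgd]
  -- geometric sum bound
  have hgeo : (∑ k ∈ Finset.Icc 1 (ℓ-1), ((2:ℝ)^(-(1:ℝ)/2))^(ℓ-1-k)) ≤ 4 := by
    set r : ℝ := (2:ℝ)^(-(1:ℝ)/2) with hrdef
    have hr0 : (0:ℝ) ≤ r := by positivity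
    have hr1 : r < 1 := Real.rpow_lt_one_of_one_lt_of_neg one_lt_two (by norm_num)
    have hrr : r * r = 1/2 := by
      rw [hrdef, ← Real.rpow_add h2, show -(1:ℝ)/2 + -(1:ℝ)/2 = -1 by norm_num,
        Real.rpow_neg_one]
      norm_num
    have hr34 : r ≤ 3/4 := by nlinarith [sq_nonneg (r - 3/4)]
    have e1 : (∑ k ∈ Finset.Icc 1 (ℓ-1), r^(ℓ-1-k)) = ∑ j ∈ Finset.range (ℓ-1), r^j := by
      rw [← Finset.Ico_add_one_right_eq_Icc, Finset.sum_Ico_eq_sum_range]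
      rw [show ℓ-1+1-1 = ℓ-1 from by omega]
      rw [← Finset.sum_range_reflect (fun j => r^j) (ℓ-1)]
      apply Finset.sum_congr rfl
      intro i hi
      rw [Finset.mem_range] at hi
      congr 1
      omega
    rw [e1, geom_sum_eq (ne_of_lt hr1) (ℓ-1),
      div_le_iff_of_neg (by linarith : r - 1 < 0)]
    have := pow_nonneg hr0 (ℓ-1)
    linarith
  -- condition E gives 16 ≤ α * (2^ℓ * γ)
  have h22 : (2:ℝ)^(2:ℝ) = 4 := by
    have e : ((2:ℕ):ℝ) = (2:ℝ) := by norm_num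
    rw [← e, Real.rpow_natCast]; norm_num
  have h16 : (16:ℝ) ≤ α * ((2:ℝ)^((ℓ:ℝ)) * γ) := by
    have hL4 : (0:ℝ) < 4/(γ*α) := by positivity
    rcases le_or_gt 2 (Real.logb 2 (4/(γ*α))) with hL | hL
    · have h1 : (1:ℝ) ≤ Real.logb 2 (Real.logb 2 (4/(γ*α))) := by
        have h2' : Real.logb 2 2 ≤ Real.logb 2 (Real.logb 2 (4/(γ*α))) :=
          Real.logb_le_logb_of_le one_lt_two h2 hL
        rwa [Real.logb_self_eq_one one_lt_two] at h2'
      have hn2 : Real.logb 2 (4/(γ*α)) + 2 ≤ (ℓ:ℝ) := by linarith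
      have hmono : (2:ℝ)^(Real.logb 2 (4/(γ*α)) + 2) ≤ (2:ℝ)^((ℓ:ℝ)) :=
        Real.rpow_le_rpow_of_exponent_le (by norm_num) hn2
      rw [Real.rpow_add h2, Real.rpow_logb h2 (by norm_num) hL4, h22] at hmono
      rw [div_mul_eq_mul_div, div_le_iff₀ (by positivity)] at hmono
      nlinarith [hmono]
    · have h4 : 4/(γ*α) < (2:ℝ)^(2:ℝ) := (Real.logb_lt_iff_lt_rpow one_lt_two hL4).mp hL
      rw [h22, div_lt_iff₀ (by positivity)] at h4
      have h256 : (2:ℝ)^(8:ℝ) ≤ (2:ℝ)^((ℓ:ℝ)) :=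
        Real.rpow_le_rpow_of_exponent_le (by norm_num) h8
      have h2_8 : (2:ℝ)^(8:ℝ) = 256 := by
        rw [show (8:ℝ) = ((8:ℕ):ℝ) by norm_num, Real.rpow_natCast]; norm_num
      rw [h2_8] at h256
      have hle : (2:ℝ)^((ℓ:ℝ)) ≤ (2:ℝ)^((ℓ:ℝ)) * (γ*α) :=
        le_mul_of_one_le_right (Real.rpow_pos_of_pos h2 _).le (by linarith)
      nlinarith [h256, hle]
  have hα2 : (2:ℝ)^((1:ℝ)-(ℓ:ℝ)-g)*4 ≤ α/2 := by
    have hx : (0:ℝ) < (2:ℝ)^((ℓ:ℝ)) * γ := by positivity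
    have e : (2:ℝ)^((1:ℝ)-(ℓ:ℝ)-g) = 2 * ((2:ℝ)^((ℓ:ℝ)+g))⁻¹ := by
      rw [show (1:ℝ)-(ℓ:ℝ)-g = 1 + -((ℓ:ℝ)+g) by ring, Real.rpow_add h2,
        Real.rpow_one, Real.rpow_neg h2.le]
    have e2 : (2:ℝ)^((ℓ:ℝ)+g) = (2:ℝ)^((ℓ:ℝ)) * γ := by
      rw [Real.rpow_add h2, ← hγ2]
    rw [e, e2, show (2:ℝ) * ((2:ℝ)^((ℓ:ℝ))*γ)⁻¹ * 4 = 8 / ((2:ℝ)^((ℓ:ℝ))*γ) from by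
      rw [div_eq_mul_inv]; ring, div_le_iff₀ hx]
    linarith [h16]
  -- sum bound
  have hS2 : (∑ k ∈ Finset.Icc 1 (ℓ-1), (2:ℝ)^(ℓ-k) * γ^(k-1) * 2^(k*(k+1)/2))
      ≤ α/2 * (γ^(ℓ-1) * 2^(ℓ*(ℓ+1)/2)) := by
    calc (∑ k ∈ Finset.Icc 1 (ℓ-1), (2:ℝ)^(ℓ-k) * γ^(k-1) * 2^(k*(k+1)/2))
        ≤ ∑ k ∈ Finset.Icc 1 (ℓ-1),
            (2:ℝ)^((1:ℝ)-(ℓ:ℝ)-g) * (γ^(ℓ-1) * 2^(ℓ*(ℓ+1)/2)) * ((2:ℝ)^(-(1:ℝ)/2))^(ℓ-1-k) :=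
          Finset.sum_le_sum key
      _ = (2:ℝ)^((1:ℝ)-(ℓ:ℝ)-g) * (γ^(ℓ-1) * 2^(ℓ*(ℓ+1)/2))
            * ∑ k ∈ Finset.Icc 1 (ℓ-1), ((2:ℝ)^(-(1:ℝ)/2))^(ℓ-1-k) := by
          rw [← Finset.mul_sum]
      _ ≤ (2:ℝ)^((1:ℝ)-(ℓ:ℝ)-g) * (γ^(ℓ-1) * 2^(ℓ*(ℓ+1)/2)) * 4 := by
          apply mul_le_mul_of_nonneg_left hgeo (by positivity)
      _ = ((2:ℝ)^((1:ℝ)-(ℓ:ℝ)-g) * 4) * (γ^(ℓ-1) * 2^(ℓ*(ℓ+1)/2)) := by ring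
      _ ≤ α/2 * (γ^(ℓ-1) * 2^(ℓ*(ℓ+1)/2)) :=
          mul_le_mul_of_nonneg_right hα2 htℓpos.le
  -- bound for the 2^ℓ/a₀ term, via condition C
  have hinvγ : γ⁻¹ ≤ (2:ℝ)^((ℓ:ℝ)/4 - 1/2) := by
    rw [hγ2, ← Real.rpow_neg h2.le]
    exact Real.rpow_le_rpow_of_exponent_le (by norm_num) (by linarith)
  have hc0 : (0:ℝ) < 2*γ/(a₀*μ*α) := by positivity
  have hce : (2:ℝ)/(a₀*μ*α) = (2*γ/(a₀*μ*α)) * γ⁻¹ := by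
    field_simp
  have hstep1 : (2:ℝ)/(a₀*μ*α) ≤ (2:ℝ)^((ℓ:ℝ)^2/4 + (ℓ:ℝ)/4 - 1/2) := by
    rcases le_or_gt (2*γ/(a₀*μ*α)) 1 with hc1 | hc1
    · rw [hce]
      calc (2*γ/(a₀*μ*α)) * γ⁻¹ ≤ 1 * (2:ℝ)^((ℓ:ℝ)/4-1/2) :=
            mul_le_mul hc1 hinvγ (by positivity) (by norm_num)
        _ ≤ (2:ℝ)^((ℓ:ℝ)^2/4+(ℓ:ℝ)/4-1/2) := by
            rw [one_mul]
            apply Real.rpow_le_rpow_of_exponent_le (by norm_num)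
            nlinarith [sq_nonneg ((ℓ:ℝ))]
    · have hlogpos : 0 < Real.logb 2 (2*γ/(a₀*μ*α)) := Real.logb_pos one_lt_two hc1
      have h0 : (0:ℝ) ≤ 4 * Real.logb 2 (2*γ/(a₀*μ*α)) := by linarith
      have hsq : 4 * Real.logb 2 (2*γ/(a₀*μ*α)) ≤ (ℓ:ℝ)^2 := by
        nlinarith [Real.mul_self_sqrt h0,
          mul_self_le_mul_self (Real.sqrt_nonneg (4 * Real.logb 2 (2*γ/(a₀*μ*α)))) hC]
      have hcb : 2*γ/(a₀*μ*α) ≤ (2:ℝ)^((ℓ:ℝ)^2/4) := by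
        apply (Real.logb_le_iff_le_rpow one_lt_two hc0).mp
        linarith
      rw [hce]
      calc (2*γ/(a₀*μ*α)) * γ⁻¹ ≤ (2:ℝ)^((ℓ:ℝ)^2/4) * (2:ℝ)^((ℓ:ℝ)/4-1/2) :=
            mul_le_mul hcb hinvγ (by positivity) (by positivity)
        _ = (2:ℝ)^((ℓ:ℝ)^2/4+(ℓ:ℝ)/4-1/2) := by
            rw [← Real.rpow_add h2]; congr 1; ring
  have hBnd : γ * ((2:ℝ)^ℓ / a₀) ≤ α/2 * (μ * (γ * (γ^(ℓ-1) * (2:ℝ)^(ℓ*(ℓ+1)/2)))) := by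
    have e : γ * ((2:ℝ)^ℓ / a₀) = ((2:ℝ)/(a₀*μ*α)) * (α*μ*γ/2) * (2:ℝ)^((ℓ:ℝ)) := by
      rw [← Real.rpow_natCast (2:ℝ) ℓ]
      field_simp
    rw [e]
    have s1 : ((2:ℝ)/(a₀*μ*α)) * (α*μ*γ/2) * (2:ℝ)^((ℓ:ℝ))
        ≤ (2:ℝ)^((ℓ:ℝ)^2/4+(ℓ:ℝ)/4-1/2) * (α*μ*γ/2) * (2:ℝ)^((ℓ:ℝ)) :=
      mul_le_mul_of_nonneg_right
        (mul_le_mul_of_nonneg_right hstep1 (by positivity)) (by positivity)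
    refine s1.trans ?_
    have e2 : (2:ℝ)^((ℓ:ℝ)^2/4+(ℓ:ℝ)/4-1/2) * (α*μ*γ/2) * (2:ℝ)^((ℓ:ℝ))
        = (α*μ*γ/2) * (2:ℝ)^((ℓ:ℝ)^2/4+5*(ℓ:ℝ)/4-1/2) := by
      rw [show (2:ℝ)^((ℓ:ℝ)^2/4+(ℓ:ℝ)/4-1/2) * (α*μ*γ/2) * (2:ℝ)^((ℓ:ℝ))
          = (α*μ*γ/2) * ((2:ℝ)^((ℓ:ℝ)^2/4+(ℓ:ℝ)/4-1/2) * (2:ℝ)^((ℓ:ℝ))) from by ring,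
        ← Real.rpow_add h2]
      congr 1
      ring
    rw [e2]
    have s2 : (2:ℝ)^((ℓ:ℝ)^2/4+5*(ℓ:ℝ)/4-1/2) ≤ (2:ℝ)^(g*((ℓ:ℝ)-1) + (ℓ:ℝ)*((ℓ:ℝ)+1)/2) := by
      apply Real.rpow_le_rpow_of_exponent_le (by norm_num)
      nlinarith [mul_nonneg (show (0:ℝ) ≤ g - (1/2 - (ℓ:ℝ)/4) by linarith)
        (show (0:ℝ) ≤ (ℓ:ℝ)-1 by
          have : (1:ℝ) ≤ (ℓ:ℝ) := by exact_mod_cast hℓ1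
          linarith)]
    calc (α*μ*γ/2) * (2:ℝ)^((ℓ:ℝ)^2/4+5*(ℓ:ℝ)/4-1/2)
        ≤ (α*μ*γ/2) * (2:ℝ)^(g*((ℓ:ℝ)-1) + (ℓ:ℝ)*((ℓ:ℝ)+1)/2) :=
          mul_le_mul_of_nonneg_left s2 (by positivity)
      _ = α/2 * (μ * (γ * (γ^(ℓ-1) * (2:ℝ)^(ℓ*(ℓ+1)/2)))) := by
          rw [← htℓe]; ring
  -- assembly
  have hγℓ : γ^ℓ = γ^(ℓ-1)*γ := by
    rw [← pow_succ]
    congr 1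
    omega
  rw [div_le_div_iff₀ (by positivity) (add_pos_of_nonneg_of_pos (mul_nonneg hμ.le (Finset.sum_nonneg fun k _ => by positivity)) (by positivity))]
  rw [hsplit, hγℓ]
  have hfin1 := mul_le_mul_of_nonneg_left hS2 (le_of_lt (mul_pos hγ hμ))
  linarith [hfin1, hBnd]
end

section
/- Let θᵢ, θ*, μᵢ, μ* > 0 with θ*/μ* > θᵢ/μᵢ, and let γ > 0 and ε > 0 satisfy 2·2ε·(2 + θ*/μ* + θᵢ/μᵢ) ≤ γ·(θ*/μ* − θᵢ/μᵢ). Then (θᵢ·(γ/(2μᵢ)) + 2ε)/(μᵢ·(γ/(2μᵢ)) − 2ε) ≤ (θ*·(γ/(2μ*)) − 2ε)/(μ*·(γ/(2μ*)) + 2ε), provided the denominators are positive. -/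
theorem stmt_10 (θi θs μi μs γ ε : ℝ)
    (hθi : 0 < θi) (hθs : 0 < θs) (hμi : 0 < μi) (hμs : 0 < μs)
    (hgap : θi / μi < θs / μs) (hγ : 0 < γ) (hε : 0 < ε)
    (hcond : 2 * (2 * ε) * (2 + θs / μs + θi / μi) ≤ γ * (θs / μs - θi / μi))
    (hdeni : 0 < μi * (γ / (2 * μi)) - 2 * ε)
    (hdens : 0 < μs * (γ / (2 * μs)) + 2 * ε) :
    (θi * (γ / (2 * μi)) + 2 * ε) / (μi * (γ / (2 * μi)) - 2 * ε) ≤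
      (θs * (γ / (2 * μs)) - 2 * ε) / (μs * (γ / (2 * μs)) + 2 * ε) := by
  have hμi' := hμi.ne'
  have hμs' := hμs.ne'
  have h1 : μi * (γ / (2 * μi)) = γ / 2 := by field_simp
  have h2 : μs * (γ / (2 * μs)) = γ / 2 := by field_simp
  have h3 : θi * (γ / (2 * μi)) = (θi / μi) * (γ / 2) := by field_simp
  have h4 : θs * (γ / (2 * μs)) = (θs / μs) * (γ / 2) := by field_simp
  rw [h1] at hdeni; rw [h2] at hdens
  rw [h1, h2, h3, h4]
  rw [div_le_div_iff₀ hdeni hdens]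
  nlinarith [mul_pos (div_pos hθi hμi) hγ, mul_pos (div_pos hθs hμs) hγ]
end
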